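/- Let X be a type and let Div X := (X →₀ ℤ) be the free abelian group on X, with degree map deg : Div X → ℤ given by the sum of coefficients and Div⁰ X := ker(deg). Let I be a finite index set, let E : I → Div X be a family of nonzero elements each of whose coefficients lies in {0,1}, with pairwise disjoint supports, and let i₀ ∈ I be an index with deg(E_{i₀}) = 1. For i ∈ I set d_i := deg(E_i) and D_i := E_i − d_i · E_{i₀}. Then the family {D_i : i ∈ I, i ≠ i₀} is ℤ-linearly independent and generates the subgroup V⁰ := V ∩ Div⁰ X, where V is the subgroup generated by {E_i : i ∈ I}; moreover (Div⁰ X)/V⁰ is torsion-free. -/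

import Mathlib

/-- The degree of a divisor in `Div X = X →₀ ℤ`: the sum of its coefficients. -/
noncomputable def divDeg {X : Type*} : (X →₀ ℤ) →+ ℤ :=
  (Finsupp.linearCombination ℤ (fun _ : X => (1 : ℤ))).toAddMonoidHom

/-!
Evaluating at one point `pᵢ` of each support identifies the subgroup `V` spanned by the reduced,
disjointly supported divisors `Eᵢ` with `ℤ^I`: every `v ∈ V` equals `∑ v(pᵢ) • Eᵢ`. Hence `V` is
saturated in `Div X` (if `n • x ∈ V` then `x ∈ V`), so `Div⁰ X / V⁰` is torsion-free, and the
`Dᵢ` are independent because `Dⱼ(pᵢ) = δᵢⱼ` for `i, j ≠ i₀`. That the `Dᵢ` span `V ∩ Div⁰ X` is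
formal: a combination `∑ nᵢ Eᵢ` equals `∑ nᵢ Dᵢ + deg(∑ nᵢ Eᵢ) • E_{i₀}`, and `D_{i₀} = 0`.
-/

theorem Finsupp.linearIndependent_of_apply_eq_ite {X ι R : Type*} [Semiring R] [DecidableEq ι]
    (D : ι → X →₀ R) (p : ι → X) (h : ∀ i j, D j (p i) = if i = j then 1 else 0) :
    LinearIndependent R D := by
  have hcomp : (LinearMap.pi fun i => Finsupp.lapply (R := R) (p i)) ∘ D =
      fun j => Pi.single j (1 : R) := by
    ext j i
    simp [h, Pi.single_apply]
  exact LinearIndependent.of_comp _ (hcomp ▸ Pi.linearIndependent_single_one ι R)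

theorem AddSubmonoid.NSMulSaturated.comap {G G' : Type*} [AddGroup G] [AddGroup G']
    {H : AddSubgroup G'} (hH : H.NSMulSaturated) (f : G →+ G') :
    (H.comap f).NSMulSaturated :=
  fun n g hng => hH (by simpa using hng)

theorem QuotientAddGroup.isAddTorsionFree_of_nsmulSaturated {G : Type*} [AddCommGroup G]
    {H : AddSubgroup G} (hH : H.NSMulSaturated) : IsAddTorsionFree (G ⧸ H) := by
  refine IsAddTorsionFree.of_not_isOfFinAddOrder fun g hg hfin => hg ?_
  obtain ⟨x, rfl⟩ := QuotientAddGroup.mk_surjective g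
  obtain ⟨n, hn, hnx⟩ := isOfFinAddOrder_iff_nsmul_eq_zero.mp hfin
  rw [← QuotientAddGroup.mk_nsmul, QuotientAddGroup.eq_zero_iff] at hnx
  exact (QuotientAddGroup.eq_zero_iff x).mpr ((hH hnx).resolve_left hn.ne')

theorem AddSubgroup.closure_range_sub_smul_eq_inf_ker {G I : Type*} [AddCommGroup G] [Fintype I]
    (f : G →+ ℤ) (E : I → G) (i₀ : I) (hi₀ : f (E i₀) = 1) :
    closure (Set.range fun i : {i : I // i ≠ i₀} => E i - f (E i) • E i₀) =
      closure (Set.range E) ⊓ f.ker := by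
  set D : I → G := fun i => E i - f (E i) • E i₀
  have hD_mem : ∀ i, D i ∈ closure (Set.range fun i : {i : I // i ≠ i₀} => D i) := by
    intro i
    by_cases hi : i = i₀
    · simp [D, hi, hi₀]
    · exact subset_closure ⟨⟨i, hi⟩, rfl⟩
  apply le_antisymm
  · rw [closure_le]
    rintro _ ⟨i, rfl⟩
    refine mem_inf.mpr ⟨sub_mem (subset_closure (Set.mem_range_self _))
      (zsmul_mem (subset_closure (Set.mem_range_self _)) _), ?_⟩
    simp [hi₀]
  · rintro v ⟨hvE, hv⟩
    obtain ⟨n, rfl⟩ := mem_closure_range_iff_of_fintype.mp hvE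
    have hsum : ∑ i, n i • E i = ∑ i, n i • D i + f (∑ i, n i • E i) • E i₀ := by
      simp [D, smul_sub, Finset.sum_sub_distrib, Finset.sum_smul, mul_smul]
    rw [hsum, AddMonoidHom.mem_ker.mp hv, zero_smul, add_zero]
    exact sum_mem fun i _ => zsmul_mem (hD_mem i) _

namespace ReducedDisjointDivisors

variable {X I : Type*} {E : I → X →₀ ℤ}

theorem apply_eq_ite_of_mem_support [DecidableEq I] (hred : ∀ i x, E i x = 0 ∨ E i x = 1)
    (hdisj : ∀ i j, i ≠ j → Disjoint (E i).support (E j).support)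
    {i : I} {x : X} (hx : x ∈ (E i).support) (j : I) : E j x = if i = j then 1 else 0 := by
  split_ifs with hij
  · subst hij
    exact (hred i x).resolve_left (Finsupp.mem_support_iff.mp hx)
  · exact Finsupp.notMem_support_iff.mp (Finset.disjoint_left.mp (hdisj i j hij) hx)

theorem sum_zsmul_apply_of_mem_support [Fintype I] (hred : ∀ i x, E i x = 0 ∨ E i x = 1)
    (hdisj : ∀ i j, i ≠ j → Disjoint (E i).support (E j).support)
    (n : I → ℤ) {i : I} {x : X} (hx : x ∈ (E i).support) : (∑ j, n j • E j) x = n i := by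
  classical
  simp [Finsupp.finsetSum_apply, apply_eq_ite_of_mem_support hred hdisj hx]

theorem mem_closure_range_iff_eq_sum [Fintype I] (hred : ∀ i x, E i x = 0 ∨ E i x = 1)
    (hdisj : ∀ i j, i ≠ j → Disjoint (E i).support (E j).support)
    (p : I → X) (hp : ∀ i, p i ∈ (E i).support) (v : X →₀ ℤ) :
    v ∈ AddSubgroup.closure (Set.range E) ↔ v = ∑ i, v (p i) • E i := by
  refine ⟨fun hv => ?_, fun hv => AddSubgroup.mem_closure_range_iff_of_fintype.mpr ⟨_, hv⟩⟩
  obtain ⟨n, rfl⟩ := AddSubgroup.mem_closure_range_iff_of_fintype.mp hv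
  simp only [sum_zsmul_apply_of_mem_support hred hdisj n (hp _)]

theorem nsmulSaturated_closure_range [Fintype I] (hne : ∀ i, E i ≠ 0)
    (hred : ∀ i x, E i x = 0 ∨ E i x = 1)
    (hdisj : ∀ i j, i ≠ j → Disjoint (E i).support (E j).support) :
    (AddSubgroup.closure (Set.range E)).NSMulSaturated := by
  choose p hp using fun i => Finsupp.support_nonempty_iff.mpr (hne i)
  intro n x hnx
  refine or_iff_not_imp_left.mpr fun hn => ?_
  rw [AddSubgroup.mem_toAddSubmonoid, mem_closure_range_iff_eq_sum hred hdisj p hp] at hnx ⊢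
  refine nsmul_right_injective hn ?_
  change n • x = n • _
  rw [hnx, Finset.smul_sum]
  simp [mul_smul]

end ReducedDisjointDivisors

/-- Lemmas 3.4/3.5: let `E i` (for `i` in a finite index set) be reduced divisors with
pairwise disjoint supports and let `i₀` be an index with `deg (E i₀) = 1`. Setting
`D i = E i − deg (E i) • E i₀`, the family `{D i : i ≠ i₀}` is `ℤ`-linearly independent
and generates `V⁰ = V ∩ Div⁰ X`, where `V` is the subgroup generated by the `E i`;
moreover `(Div⁰ X)/V⁰` is torsion-free. -/
theorem fiber_divisors_basis_of_degree_zero_part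
    {X : Type*} {I : Type*} [Fintype I] (E : I → (X →₀ ℤ))
    (hne : ∀ i, E i ≠ 0)
    (hred : ∀ i, ∀ x : X, E i x = 0 ∨ E i x = 1)
    (hdisj : ∀ i j, i ≠ j → Disjoint (E i).support (E j).support)
    (i₀ : I) (hi₀ : divDeg (E i₀) = 1)
    (D : I → (X →₀ ℤ)) (hD : ∀ i, D i = E i - divDeg (E i) • E i₀)
    (V : AddSubgroup (X →₀ ℤ)) (hV : V = AddSubgroup.closure (Set.range E)) :
    LinearIndependent ℤ (fun i : {i : I // i ≠ i₀} => D i.1) ∧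
    AddSubgroup.closure (Set.range (fun i : {i : I // i ≠ i₀} => D i.1)) =
      V ⊓ (divDeg (X := X)).ker ∧
    ∀ g : (↥(divDeg (X := X)).ker ⧸ (V.comap (divDeg (X := X)).ker.subtype)),
      g ≠ 0 → ¬IsOfFinAddOrder g := by
  classical
  obtain rfl : D = fun i => E i - divDeg (E i) • E i₀ := funext hD
  subst hV
  choose p hp using fun i => Finsupp.support_nonempty_iff.mpr (hne i)
  refine ⟨?_, AddSubgroup.closure_range_sub_smul_eq_inf_ker divDeg E i₀ hi₀, ?_⟩
  · refine Finsupp.linearIndependent_of_apply_eq_ite _ (fun i => p i.1) fun i j => ?_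
    simp [ReducedDisjointDivisors.apply_eq_ite_of_mem_support hred hdisj (hp i), i.2,
      Subtype.ext_iff]
  · exact isAddTorsionFree_iff_not_isOfFinAddOrder.mp
      (QuotientAddGroup.isAddTorsionFree_of_nsmulSaturated
        ((ReducedDisjointDivisors.nsmulSaturated_closure_range hne hred hdisj).comap _))
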